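/- Suppose the quantized iterates satisfy ‖w^{n+1} − w^n‖ ≤ D η^n and the quantization error satisfies E‖Q(w^{n+1} − w^n) − (w^{n+1} − w^n)‖ ≤ σ√d·s/2 for every n. Then for D-Lipschitz F and delay τ^k, η^k E[F(w^{k−τ^k}) − F(w^k)] ≤ (D²/2)τ^k(η^k)² + (D²/2)∑_{n=k−τ^k}^{k−1}(η^n)² + D η^k τ^k σ√d s / 2. -/

import Mathlib

/-!
Along each sample path, the Lipschitz bound and the telescoping triangle inequality give
`F(w^{k-τ}) - F(w^k) ≤ D · ∑ₘ ‖w^{m+1} - w^m‖ ≤ D² ∑ₘ η^m`, the sum running over the `τ` indices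
`k - τ ≤ m < k`. Multiplying by `η^k` and using `η^k η^m ≤ ((η^k)² + (η^m)²) / 2` yields the first
two terms; the quantization term is nonnegative slack.
-/

open MeasureTheory

theorem sub_le_mul_sum_of_norm_sub_succ_le {E : Type*} [SeminormedAddCommGroup E]
    {F : E → ℝ} {D : ℝ} (hD : 0 ≤ D) (hLip : ∀ x y : E, |F x - F y| ≤ D * ‖x - y‖)
    {x : ℕ → E} {b : ℕ → ℝ} (hstep : ∀ i, ‖x (i + 1) - x i‖ ≤ b i) {m n : ℕ} (hmn : m ≤ n) :
    F (x m) - F (x n) ≤ D * ∑ i ∈ Finset.Ico m n, b i := by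
  have hdist : ‖x m - x n‖ ≤ ∑ i ∈ Finset.Ico m n, b i := by
    rw [← dist_eq_norm]
    refine dist_le_Ico_sum_of_dist_le hmn fun {i} _ _ => ?_
    rw [dist_comm, dist_eq_norm]
    exact hstep i
  calc F (x m) - F (x n) ≤ |F (x m) - F (x n)| := le_abs_self _
    _ ≤ D * ‖x m - x n‖ := hLip _ _
    _ ≤ D * ∑ i ∈ Finset.Ico m n, b i := mul_le_mul_of_nonneg_left hdist hD

theorem integral_sub_le_mul_sum_of_norm_sub_succ_le {Ω E : Type*} [MeasurableSpace Ω]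
    [SeminormedAddCommGroup E] (μ : Measure Ω) [IsProbabilityMeasure μ]
    {F : E → ℝ} {D : ℝ} (hD : 0 ≤ D) (hLip : ∀ x y : E, |F x - F y| ≤ D * ‖x - y‖)
    {x : ℕ → Ω → E} {b : ℕ → ℝ} (hstep : ∀ i ω, ‖x (i + 1) ω - x i ω‖ ≤ b i)
    {m n : ℕ} (hmn : m ≤ n) (hInt : Integrable (fun ω => F (x m ω) - F (x n ω)) μ) :
    ∫ ω, (F (x m ω) - F (x n ω)) ∂μ ≤ D * ∑ i ∈ Finset.Ico m n, b i := by
  calc ∫ ω, (F (x m ω) - F (x n ω)) ∂μ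
      ≤ ∫ _, D * ∑ i ∈ Finset.Ico m n, b i ∂μ :=
        integral_mono hInt (integrable_const _) fun ω =>
          sub_le_mul_sum_of_norm_sub_succ_le (x := (x · ω)) hD hLip (hstep · ω) hmn
    _ = D * ∑ i ∈ Finset.Ico m n, b i := by simp

theorem mul_sum_le_card_mul_sq_div_two_add_sum_sq_div_two {ι : Type*} (s : Finset ι)
    (a : ℝ) (b : ι → ℝ) :
    a * ∑ i ∈ s, b i ≤ s.card * a ^ 2 / 2 + ∑ i ∈ s, b i ^ 2 / 2 := by
  calc a * ∑ i ∈ s, b i = ∑ i ∈ s, a * b i := Finset.mul_sum _ _ _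
    _ ≤ ∑ i ∈ s, (a ^ 2 / 2 + b i ^ 2 / 2) :=
        Finset.sum_le_sum fun i _ => by nlinarith [sq_nonneg (a - b i)]
    _ = s.card * a ^ 2 / 2 + ∑ i ∈ s, b i ^ 2 / 2 := by
        rw [Finset.sum_add_distrib, Finset.sum_const, nsmul_eq_mul, mul_div_assoc]

theorem delayed_comparison_bound_quantized_general {d : ℕ}
    {Ω : Type*} [MeasurableSpace Ω] (μ : Measure Ω) [IsProbabilityMeasure μ]
    (F : EuclideanSpace ℝ (Fin d) → ℝ) (D σ s : ℝ) (hs : 0 < s) (hσ : 0 ≤ σ)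
    (hLip : ∀ x y : EuclideanSpace ℝ (Fin d), |F x - F y| ≤ D * ‖x - y‖)
    (η : ℕ → ℝ) (hpos : ∀ m, 0 < η m)
    (w : ℕ → Ω → EuclideanSpace ℝ (Fin d))
    (hstep : ∀ m ω, ‖w (m + 1) ω - w m ω‖ ≤ D * η m)
    (k τ : ℕ) (hτ : τ ≤ k)
    (hInt : Integrable (fun ω => F (w (k - τ) ω) - F (w k ω)) μ) :
    η k * ∫ ω, (F (w (k - τ) ω) - F (w k ω)) ∂μ ≤
      D ^ 2 / 2 * τ * (η k) ^ 2 + D ^ 2 / 2 * ∑ m ∈ Finset.Ico (k - τ) k, (η m) ^ 2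
        + D * η k * τ * σ * Real.sqrt d * s / 2 := by
  obtain ⟨ω₀⟩ := nonempty_of_isProbabilityMeasure μ
  have hD : 0 ≤ D :=
    nonneg_of_mul_nonneg_left ((norm_nonneg _).trans (hstep 0 ω₀)) (hpos 0)
  have hexp := integral_sub_le_mul_sum_of_norm_sub_succ_le μ hD hLip hstep (Nat.sub_le k τ) hInt
  have hcard : (Finset.Ico (k - τ) k).card = τ := by
    rw [Nat.card_Ico]
    omega
  have hquant : 0 ≤ D * η k * τ * σ * Real.sqrt d * s / 2 := by
    have := (hpos k).le
    positivity
  calc η k * ∫ ω, (F (w (k - τ) ω) - F (w k ω)) ∂μ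
      ≤ η k * (D * ∑ m ∈ Finset.Ico (k - τ) k, D * η m) :=
        mul_le_mul_of_nonneg_left hexp (hpos k).le
    _ = D ^ 2 * (η k * ∑ m ∈ Finset.Ico (k - τ) k, η m) := by
        rw [← Finset.mul_sum]
        ring
    _ ≤ D ^ 2 * (τ * η k ^ 2 / 2 + ∑ m ∈ Finset.Ico (k - τ) k, η m ^ 2 / 2) := by
        gcongr
        simpa only [hcard] using mul_sum_le_card_mul_sq_div_two_add_sum_sq_div_two
          (Finset.Ico (k - τ) k) (η k) η
    _ ≤ _ := by
        rw [← Finset.sum_div]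
        linarith

/-- delayed comparison bound with quantization error:
if the quantized iterates satisfy ‖w^{n+1} − w^n‖ ≤ Dη^n and
E‖Q(w^{n+1} − w^n) − (w^{n+1} − w^n)‖ ≤ σ√d·s/2 for every n, then for a
D-Lipschitz F and delay τ^k ≤ k,
η^k E[F(w^{k−τ^k}) − F(w^k)]
  ≤ (D²/2)τ^k(η^k)² + (D²/2)∑_{n=k−τ^k}^{k−1}(η^n)² + Dη^kτ^kσ√d·s/2. -/
theorem delayed_comparison_bound_quantized {d : ℕ}
    {Ω : Type*} [MeasurableSpace Ω] (μ : Measure Ω) [IsProbabilityMeasure μ]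
    (F : EuclideanSpace ℝ (Fin d) → ℝ) (D σ s : ℝ) (hs : 0 < s) (hσ : 0 ≤ σ)
    (hLip : ∀ x y : EuclideanSpace ℝ (Fin d), |F x - F y| ≤ D * ‖x - y‖)
    (η : ℕ → ℝ) (hpos : ∀ m, 0 < η m) (hdec : ∀ m l, m ≤ l → η l ≤ η m)
    (w : ℕ → Ω → EuclideanSpace ℝ (Fin d))
    (Qw : ℕ → Ω → EuclideanSpace ℝ (Fin d))
    (hstep : ∀ m ω, ‖w (m + 1) ω - w m ω‖ ≤ D * η m)
    (hQerr : ∀ m : ℕ,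
      ∫ ω, ‖Qw m ω - (w (m + 1) ω - w m ω)‖ ∂μ ≤ σ * Real.sqrt d * s / 2)
    (k τ : ℕ) (hτ : τ ≤ k)
    (hInt : Integrable (fun ω => F (w (k - τ) ω) - F (w k ω)) μ) :
    η k * ∫ ω, (F (w (k - τ) ω) - F (w k ω)) ∂μ ≤
      D ^ 2 / 2 * τ * (η k) ^ 2 + D ^ 2 / 2 * ∑ m ∈ Finset.Ico (k - τ) k, (η m) ^ 2
        + D * η k * τ * σ * Real.sqrt d * s / 2 :=
  delayed_comparison_bound_quantized_general μ F D σ s hs hσ hLip η hpos w hstep k τ hτ hInt
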